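/- arXiv:2405.17304 — 2 statements merged into one kernel-verified Lean document; each statement's English description precedes it below -/
import Mathlib

section
/- Farkas' lemma (implication form): For A an L×N real matrix, b ∈ ℝᴸ, c ∈ ℝᴺ, d ∈ ℝ, the statement (∀ y ∈ ℝᴺ, A y ≤ b → cᵀ y ≤ d) holds if and only if there exists z ∈ ℝᴸ with z ≥ 0 such that either (Aᵀ z = c and bᵀ z ≤ d) or (Aᵀ z = 0 and bᵀ z < 0). -/
open Matrix

private def dotLin {n : ℕ} (v : Fin n → ℝ) : (Fin n → ℝ) →ₗ[ℝ] ℝ where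
  toFun x := v ⬝ᵥ x
  map_add' x y := by simp [dotProduct_add]
  map_smul' r x := by simp [dotProduct_smul]

private lemma bartl {V : Type*} [AddCommGroup V] [Module ℝ V] :
    ∀ (m : ℕ) (a : Fin m → (V →ₗ[ℝ] ℝ)) (c : V →ₗ[ℝ] ℝ),
      (∀ x, (∀ i, a i x ≤ 0) → c x ≤ 0) →
      ∃ l : Fin m → ℝ, (∀ i, 0 ≤ l i) ∧ c = ∑ i, l i • a i := by
  intro m
  induction m with
  | zero =>
    intro a c h
    refine ⟨0, fun i => le_rfl, ?_⟩
    ext x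
    have h1 := h x (fun i => i.elim0)
    have h2 := h (-x) (fun i => i.elim0)
    simp only [map_neg, neg_nonpos] at h2
    simp only [Finset.univ_eq_empty, Finset.sum_empty, LinearMap.zero_apply]
    linarith [h2]
  | succ m ih =>
    intro a c h
    by_cases hcase : ∀ x, (∀ i : Fin m, a i.succ x ≤ 0) → c x ≤ 0
    · obtain ⟨l, hl, hcl⟩ := ih (fun i => a i.succ) c hcase
      refine ⟨Fin.cons 0 l, fun i => ?_, ?_⟩
      · refine Fin.cases ?_ ?_ i <;> simp [hl]
      · rw [Fin.sum_univ_succ]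
        simpa using hcl
    · push_neg at hcase
      obtain ⟨y, hy, hcy⟩ := hcase
      have ha0y : 0 < a 0 y := by
        by_contra hle
        push_neg at hle
        exact absurd (h y (fun i => Fin.cases hle hy i)) (not_le.2 hcy)
      set y' : V := (a 0 y)⁻¹ • y with hy'def
      have ha0y' : a 0 y' = 1 := by
        simp [hy'def, _root_.map_smul, inv_mul_cancel₀ (ne_of_gt ha0y)]
      have hyi' : ∀ i : Fin m, a i.succ y' ≤ 0 := by
        intro i
        simp only [hy'def, _root_.map_smul, smul_eq_mul]
        exact mul_nonpos_of_nonneg_of_nonpos (le_of_lt (inv_pos.2 ha0y)) (hy i)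
      have hcy' : 0 < c y' := by
        simp only [hy'def, _root_.map_smul, smul_eq_mul]
        exact mul_pos (inv_pos.2 ha0y) hcy
      set a' : Fin m → V →ₗ[ℝ] ℝ := fun i => a i.succ - (a i.succ y') • a 0 with ha'def
      set c' : V →ₗ[ℝ] ℝ := c - (c y') • a 0 with hc'def
      have hip : ∀ x, (∀ i, a' i x ≤ 0) → c' x ≤ 0 := by
        intro x hx
        have hPx : ∀ j : Fin (m+1), a j (x - (a 0 x) • y') ≤ 0 := by
          intro j
          refine Fin.cases ?_ ?_ j
          · simp [map_sub, _root_.map_smul, ha0y']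
          · intro i
            have := hx i
            simp only [ha'def, LinearMap.sub_apply, LinearMap.smul_apply, smul_eq_mul] at this
            simp only [map_sub, _root_.map_smul, smul_eq_mul]
            linarith [this]
        have := h _ hPx
        simp only [map_sub, _root_.map_smul, smul_eq_mul] at this
        simp only [hc'def, LinearMap.sub_apply, LinearMap.smul_apply, smul_eq_mul]
        linarith [this]
      obtain ⟨l, hl, hcl⟩ := ih a' c' hip
      set μ : ℝ := c y' - ∑ i, l i * (a i.succ y') with hμdef
      have hμ : 0 ≤ μ := by
        have : ∑ i, l i * (a i.succ y') ≤ 0 :=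
          Finset.sum_nonpos fun i _ => mul_nonpos_of_nonneg_of_nonpos (hl i) (hyi' i)
        simp only [hμdef]
        linarith [hcy']
      refine ⟨Fin.cons μ l, fun i => ?_, ?_⟩
      · refine Fin.cases ?_ ?_ i
        · exact hμ
        · exact hl
      · ext x
        have hx := LinearMap.congr_fun hcl x
        simp only [hc'def, ha'def, LinearMap.sub_apply, LinearMap.smul_apply, smul_eq_mul,
          LinearMap.sum_apply] at hx
        simp only [LinearMap.sum_apply, LinearMap.add_apply, LinearMap.smul_apply, smul_eq_mul,
          Fin.sum_univ_succ, Fin.cons_zero, Fin.cons_succ, hμdef]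
        have hsum : ∑ i : Fin m, l i * (a i.succ x - a i.succ y' * a 0 x)
            = ∑ i : Fin m, l i * a i.succ x - (∑ i : Fin m, l i * a i.succ y') * a 0 x := by
          rw [Finset.sum_mul, ← Finset.sum_sub_distrib]
          congr 1
          ext i
          ring
        rw [hsum] at hx
        linarith [hx]

theorem farkas_implication_form {L N : ℕ}
    (A : Matrix (Fin L) (Fin N) ℝ) (b : Fin L → ℝ) (c : Fin N → ℝ) (d : ℝ) :
    (∀ y : Fin N → ℝ, A.mulVec y ≤ b → c ⬝ᵥ y ≤ d) ↔
      ∃ z : Fin L → ℝ, 0 ≤ z ∧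
        ((Aᵀ.mulVec z = c ∧ b ⬝ᵥ z ≤ d) ∨ (Aᵀ.mulVec z = 0 ∧ b ⬝ᵥ z < 0)) := by
  constructor
  · intro h
    set f : Fin (L+1) → ((Fin N → ℝ) × ℝ →ₗ[ℝ] ℝ) :=
      Fin.cons (-(LinearMap.snd ℝ (Fin N → ℝ) ℝ))
        (fun i => dotLin (A i) ∘ₗ LinearMap.fst ℝ (Fin N → ℝ) ℝ
          - b i • LinearMap.snd ℝ (Fin N → ℝ) ℝ) with hfdef
    have hf0 : ∀ p : (Fin N → ℝ) × ℝ, f 0 p = -p.2 := by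
      intro p; simp [hfdef]
    have hfs : ∀ (i : Fin L) (p : (Fin N → ℝ) × ℝ), f i.succ p = A i ⬝ᵥ p.1 - b i * p.2 := by
      intro i p; simp [hfdef, dotLin]
    -- the homogeneous constraints unpacked
    have hcon : ∀ (y : Fin N → ℝ) (t : ℝ), (∀ i, f i (y, t) ≤ 0) →
        0 ≤ t ∧ ∀ i, A i ⬝ᵥ y ≤ t * b i := by
      intro y t hyt
      have h0 := hyt 0
      rw [hf0] at h0
      refine ⟨by linarith, fun i => ?_⟩
      have := hyt i.succ
      rw [hfs] at this
      linarith [this]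
    -- scaling: if t > 0 and A y ≤ t b then y/t is feasible
    have hscale : ∀ (y : Fin N → ℝ) (t : ℝ), 0 < t → (∀ i, A i ⬝ᵥ y ≤ t * b i) →
        A.mulVec (t⁻¹ • y) ≤ b := by
      intro y t ht hyt i
      have : A.mulVec (t⁻¹ • y) i = t⁻¹ * (A i ⬝ᵥ y) := by
        simp [Matrix.mulVec_smul, Matrix.mulVec]
      rw [this]
      rw [inv_mul_le_iff₀ ht]
      linarith [hyt i]
    by_cases hfeas : ∃ y₀, A.mulVec y₀ ≤ b
    · -- feasible case
      obtain ⟨y₀, hy₀⟩ := hfeas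
      set g : (Fin N → ℝ) × ℝ →ₗ[ℝ] ℝ :=
        dotLin c ∘ₗ LinearMap.fst ℝ (Fin N → ℝ) ℝ - d • LinearMap.snd ℝ (Fin N → ℝ) ℝ
        with hgdef
      have hg : ∀ p : (Fin N → ℝ) × ℝ, g p = c ⬝ᵥ p.1 - d * p.2 := by
        intro p; simp [hgdef, dotLin]
      have hyp : ∀ p : (Fin N → ℝ) × ℝ, (∀ i, f i p ≤ 0) → g p ≤ 0 := by
        rintro ⟨y, t⟩ hp
        obtain ⟨ht, hAy⟩ := hcon y t hp
        rw [hg]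
        simp only
        rcases lt_or_eq_of_le ht with ht' | rfl
        · have := h _ (hscale y t ht' hAy)
          have hcy : c ⬝ᵥ (t⁻¹ • y) = t⁻¹ * (c ⬝ᵥ y) := by simp [dotProduct_smul]
          rw [hcy, inv_mul_le_iff₀ ht'] at this
          nlinarith [this]
        · -- t = 0
          have hAy0 : ∀ i, A i ⬝ᵥ y ≤ 0 := by
            intro i; have := hAy i; simpa using this
          have hc0 : c ⬝ᵥ y ≤ 0 := by
            by_contra hpos'
            push_neg at hpos'
            set s : ℝ := (d - c ⬝ᵥ y₀ + 1) / (c ⬝ᵥ y) with hsdef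
            have hs : 0 ≤ s := div_nonneg (by linarith [h y₀ hy₀]) hpos'.le
            have hfeas2 : A.mulVec (y₀ + s • y) ≤ b := by
              intro i
              have heq : A.mulVec (y₀ + s • y) i = A.mulVec y₀ i + s * (A i ⬝ᵥ y) := by
                simp [Matrix.mulVec_add, Matrix.mulVec_smul, Matrix.mulVec]
              rw [heq]
              have h1 := hy₀ i
              have h2 := mul_nonpos_of_nonneg_of_nonpos hs (hAy0 i)
              linarith [h1, h2]
            have hle := h _ hfeas2
            rw [dotProduct_add, dotProduct_smul, smul_eq_mul] at hle
            have hval : s * (c ⬝ᵥ y) = d - c ⬝ᵥ y₀ + 1 :=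
              div_mul_cancel₀ _ (ne_of_gt hpos')
            linarith [hle, hval]
          simpa using hc0
      obtain ⟨l, hl, hgl⟩ := bartl (L+1) f g hyp
      set z : Fin L → ℝ := fun i => l i.succ with hzdef
      have key : ∀ p : (Fin N → ℝ) × ℝ, g p = l 0 * f 0 p + ∑ i : Fin L, z i * f i.succ p := by
        intro p
        have := LinearMap.congr_fun hgl p
        simpa [LinearMap.sum_apply, Fin.sum_univ_succ] using this
      have hAt : ∀ y : Fin N → ℝ, c ⬝ᵥ y = ∑ i : Fin L, z i * (A i ⬝ᵥ y) := by
        intro y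
        have := key (y, 0)
        rw [hg, hf0] at this
        simp only [mul_zero, sub_zero, neg_zero, zero_add] at this
        rw [this]
        refine Finset.sum_congr rfl fun i _ => ?_
        rw [hfs]
        simp
      have hATz : Aᵀ.mulVec z = c := by
        funext j
        have h1 : Aᵀ.mulVec z j = ∑ i, z i * A i j := by
          simp [Matrix.mulVec, dotProduct, Matrix.transpose_apply, mul_comm]
        have h2 := hAt (Pi.single j 1)
        simp only [dotProduct_single, mul_one] at h2
        rw [h1, ← h2]
      have hbz : b ⬝ᵥ z ≤ d := by
        have := key (0, 1)
        rw [hg, hf0] at this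
        simp only [dotProduct_zero, mul_one, zero_sub] at this
        have hsum : ∑ i : Fin L, z i * f i.succ ((0 : Fin N → ℝ), (1:ℝ))
            = -∑ i : Fin L, z i * b i := by
          rw [← Finset.sum_neg_distrib]
          refine Finset.sum_congr rfl fun i _ => ?_
          rw [hfs]
          simp
        rw [hsum] at this
        have hbzeq : b ⬝ᵥ z = ∑ i : Fin L, z i * b i := by
          simp [dotProduct, mul_comm]
        rw [hbzeq]
        have := hl 0
        linarith [this, hl 0]
      exact ⟨z, fun i => hl i.succ, Or.inl ⟨hATz, hbz⟩⟩
    · -- infeasible case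
      push_neg at hfeas
      set g : (Fin N → ℝ) × ℝ →ₗ[ℝ] ℝ := LinearMap.snd ℝ (Fin N → ℝ) ℝ with hgdef
      have hg : ∀ p : (Fin N → ℝ) × ℝ, g p = p.2 := fun p => rfl
      have hyp : ∀ p : (Fin N → ℝ) × ℝ, (∀ i, f i p ≤ 0) → g p ≤ 0 := by
        rintro ⟨y, t⟩ hp
        obtain ⟨ht, hAy⟩ := hcon y t hp
        rw [hg]
        simp only
        by_contra hpos'
        push_neg at hpos'
        exact hfeas _ (hscale y t hpos' hAy)
      obtain ⟨l, hl, hgl⟩ := bartl (L+1) f g hyp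
      set z : Fin L → ℝ := fun i => l i.succ with hzdef
      have key : ∀ p : (Fin N → ℝ) × ℝ, g p = l 0 * f 0 p + ∑ i : Fin L, z i * f i.succ p := by
        intro p
        have := LinearMap.congr_fun hgl p
        simpa [LinearMap.sum_apply, Fin.sum_univ_succ] using this
      have hAt : ∀ y : Fin N → ℝ, (0:ℝ) = ∑ i : Fin L, z i * (A i ⬝ᵥ y) := by
        intro y
        have := key (y, 0)
        rw [hg, hf0] at this
        simp only [neg_zero, mul_zero, zero_add] at this
        rw [this]
        refine Finset.sum_congr rfl fun i _ => ?_
        rw [hfs]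
        simp
      have hATz : Aᵀ.mulVec z = 0 := by
        funext j
        have h1 : Aᵀ.mulVec z j = ∑ i, z i * A i j := by
          simp [Matrix.mulVec, dotProduct, Matrix.transpose_apply, mul_comm]
        have h2 := hAt (Pi.single j 1)
        simp only [dotProduct_single, mul_one] at h2
        rw [h1, ← h2]
        rfl
      have hbz : b ⬝ᵥ z < 0 := by
        have := key (0, 1)
        rw [hg, hf0] at this
        simp only [mul_one] at this
        have hsum : ∑ i : Fin L, z i * f i.succ ((0 : Fin N → ℝ), (1:ℝ))
            = -∑ i : Fin L, z i * b i := by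
          rw [← Finset.sum_neg_distrib]
          refine Finset.sum_congr rfl fun i _ => ?_
          rw [hfs]
          simp
        rw [hsum] at this
        have hbzeq : b ⬝ᵥ z = ∑ i : Fin L, z i * b i := by
          simp [dotProduct, mul_comm]
        rw [hbzeq]
        have := hl 0
        linarith [this, hl 0]
      exact ⟨z, fun i => hl i.succ, Or.inr ⟨hATz, hbz⟩⟩
  · -- easy direction
    rintro ⟨z, hz, hcase⟩ y hy
    have hzAy : z ⬝ᵥ A.mulVec y ≤ z ⬝ᵥ b := by
      apply Finset.sum_le_sum
      intro i _
      exact mul_le_mul_of_nonneg_left (hy i) (hz i)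
    have htrans : ∀ w : Fin N → ℝ, (Aᵀ.mulVec z) ⬝ᵥ w = z ⬝ᵥ A.mulVec w := by
      intro w
      rw [Matrix.mulVec_transpose]
      exact (Matrix.dotProduct_mulVec z A w).symm
    rcases hcase with ⟨hAc, hbd⟩ | ⟨hA0, hb0⟩
    · calc c ⬝ᵥ y = (Aᵀ.mulVec z) ⬝ᵥ y := by rw [hAc]
        _ = z ⬝ᵥ A.mulVec y := htrans y
        _ ≤ z ⬝ᵥ b := hzAy
        _ = b ⬝ᵥ z := dotProduct_comm z b
        _ ≤ d := hbd
    · exfalso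
      have h0 : (0:ℝ) = z ⬝ᵥ A.mulVec y := by
        rw [← htrans y, hA0]
        simp
      rw [dotProduct_comm z b] at hzAy
      rw [← h0] at hzAy
      linarith [hzAy, hb0]
end

section
/- Robbins–Siegmund theorem for nonnegative almost supermartingales: let {ℱₜ} be a filtration and Vₜ, Uₜ, Wₜ nonnegative real-valued integrable adapted processes such that for all t, E[V_{t+1} | ℱₜ] ≤ Vₜ − Uₜ + Wₜ almost surely. Then with probability one, either ∑ₜ Uₜ < ∞ or ∑ₜ Wₜ = ∞. -/
/-!
The compensated process `X t = V t + ∑ s < t, (U s - W s)` is a supermartingale, bounded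
below by the predictable process `-∑ s < t, W s`. Stopping `X` just before `∑ s ≤ t, W s`
exceeds a level `k` gives a supermartingale bounded below by `-k`, which converges almost
surely; on the event `∑ W ≤ k` it never stops. Hence almost surely on `∑ W < ∞` the process
`X` converges, so the partial sums `∑ s < t, U s ≤ X t + ∑ W` stay bounded.
-/

open MeasureTheory Filter Finset
open scoped ENNReal Topology

theorem tsum_ofReal_lt_top_iff_bddAbove_range_sum {f : ℕ → ℝ} (hf : ∀ n, 0 ≤ f n) :
    ∑' n, ENNReal.ofReal (f n) < ∞ ↔
      BddAbove (Set.range fun n => ∑ i ∈ range n, f i) := by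
  constructor
  · intro h
    have hs : Summable f := by
      simpa [ENNReal.toReal_ofReal (hf _)] using ENNReal.summable_toReal h.ne
    exact ⟨∑' n, f n, Set.forall_mem_range.2 fun n => hs.sum_le_tsum _ fun i _ => hf i⟩
  · rintro ⟨C, hC⟩
    exact (summable_of_sum_range_le hf fun n => hC (Set.mem_range_self n)).tsum_ofReal_lt_top

namespace MeasureTheory

variable {Ω : Type*} {m0 : MeasurableSpace Ω} {μ : Measure Ω} {ℱ : Filtration ℕ m0}

theorem Adapted.measurable_sum_range {X : ℕ → Ω → ℝ} (hX : Adapted ℱ X) {n t : ℕ}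
    (hnt : n ≤ t + 1) : Measurable[ℱ t] fun ω => ∑ s ∈ range n, X s ω :=
  Finset.measurable_sum _ fun s hs =>
    (hX s).mono (ℱ.mono (by rw [mem_range] at hs; omega)) le_rfl

theorem supermartingale_add_sum_sub_sum_of_condExp_le [IsFiniteMeasure μ]
    {V U W : ℕ → Ω → ℝ} (hV : Adapted ℱ V) (hU : Adapted ℱ U) (hW : Adapted ℱ W)
    (hVint : ∀ t, Integrable (V t) μ) (hUint : ∀ t, Integrable (U t) μ)
    (hWint : ∀ t, Integrable (W t) μ)
    (hdrift : ∀ t, μ[V (t + 1) | ℱ t] ≤ᵐ[μ] V t - U t + W t) :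
    Supermartingale
      (fun t ω => V t ω + (∑ s ∈ range t, U s ω - ∑ s ∈ range t, W s ω)) ℱ μ := by
  set D : ℕ → Ω → ℝ := fun t ω => ∑ s ∈ range t, U s ω - ∑ s ∈ range t, W s ω
  have hDmeas : ∀ {n t}, n ≤ t + 1 → Measurable[ℱ t] (D n) := fun hnt =>
    (hU.measurable_sum_range hnt).sub (hW.measurable_sum_range hnt)
  have hDint : ∀ n, Integrable (D n) μ := fun n =>
    (integrable_finsetSum _ fun s _ => hUint s).sub (integrable_finsetSum _ fun s _ => hWint s)
  refine supermartingale_nat (fun t => ((hV t).add (hDmeas t.le_succ)).stronglyMeasurable)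
    (fun t => (hVint t).add (hDint t)) fun t => ?_
  have hD : μ[D (t + 1) | ℱ t] = D (t + 1) :=
    condExp_of_stronglyMeasurable (ℱ.le t) (hDmeas le_rfl).stronglyMeasurable (hDint _)
  filter_upwards [condExp_add (hVint (t + 1)) (hDint (t + 1)) (ℱ t), hdrift t] with ω hadd hV
  rw [show (fun ω => V (t + 1) ω + D (t + 1) ω) = V (t + 1) + D (t + 1) from rfl, hadd,
    Pi.add_apply, hD]
  simp only [D, sum_range_succ, Pi.add_apply, Pi.sub_apply] at hV ⊢
  linarith

protected theorem Supermartingale.stoppedProcess [IsFiniteMeasure μ] {f : ℕ → Ω → ℝ}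
    (hf : Supermartingale f ℱ μ) {τ : Ω → WithTop ℕ} (hτ : IsStoppingTime ℱ τ) :
    Supermartingale (stoppedProcess f τ) ℱ μ := by
  simpa only [stoppedProcess_neg, neg_neg] using (hf.neg.stoppedProcess hτ).neg

theorem Supermartingale.exists_ae_tendsto_of_forall_le [IsFiniteMeasure μ] {f : ℕ → Ω → ℝ}
    (hf : Supermartingale f ℱ μ) {c : ℝ} (hc : ∀ n ω, c ≤ f n ω) :
    ∀ᵐ ω ∂μ, ∃ l, Tendsto (fun n => f n ω) atTop (𝓝 l) := by
  have hbdd : ∀ n,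
      eLpNorm ((-f) n) 1 μ ≤ (∫ ω, f 0 ω ∂μ + 2 * |c| * μ.real Set.univ).toNNReal := by
    intro n
    rw [Pi.neg_apply, eLpNorm_neg, eLpNorm_one_eq_lintegral_enorm,
      ← ofReal_integral_norm_eq_lintegral_enorm (hf.integrable n)]
    refine ENNReal.ofReal_le_ofReal ?_
    have habs : ∀ ω, ‖f n ω‖ ≤ f n ω + 2 * |c| := fun ω => by
      rw [Real.norm_eq_abs, abs_le]
      constructor <;> linarith [hc n ω, neg_abs_le c, le_abs_self c]
    calc ∫ ω, ‖f n ω‖ ∂μ ≤ ∫ ω, (f n ω + 2 * |c|) ∂μ :=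
          integral_mono (hf.integrable n).norm ((hf.integrable n).add (integrable_const _)) habs
      _ = ∫ ω, f n ω ∂μ + 2 * |c| * μ.real Set.univ := by
          rw [integral_add (hf.integrable n) (integrable_const _), integral_const, smul_eq_mul,
            mul_comm]
      _ ≤ ∫ ω, f 0 ω ∂μ + 2 * |c| * μ.real Set.univ := by
          have := hf.setIntegral_le n.zero_le MeasurableSet.univ
          simp only [Measure.restrict_univ] at this
          linarith
  filter_upwards [hf.neg.exists_ae_tendsto_of_bdd hbdd] with ω ⟨l, hl⟩
  exact ⟨-l, by simpa using hl.neg⟩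

theorem stoppedProcess_hittingAfter_succ_le {A : ℕ → Ω → ℝ} {k : ℝ} {ω : Ω} (h₀ : A 0 ω ≤ k)
    (n : ℕ) : stoppedProcess A (hittingAfter (fun t => A (t + 1)) (Set.Ioi k) 0) n ω ≤ k := by
  set τ := hittingAfter (fun t => A (t + 1)) (Set.Ioi k) 0
  have hle : ∀ j : ℕ, (j : WithTop ℕ) ≤ τ ω → A j ω ≤ k := by
    rintro (_ | i) hi
    · exact h₀
    · have hiτ : (i : WithTop ℕ) < τ ω := (WithTop.coe_lt_coe.2 i.lt_succ_self).trans_le hi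
      simpa using notMem_of_lt_hittingAfter hiτ i.zero_le
  rcases le_total (n : WithTop ℕ) (τ ω) with hn | hτn
  · rw [stoppedProcess_eq_of_le (i := n) hn]
    exact hle n hn
  · obtain ⟨j, hj⟩ :=
      WithTop.ne_top_iff_exists.mp (ne_top_of_le_ne_top WithTop.coe_ne_top hτn)
    rw [stoppedProcess_eq_of_ge (i := n) hτn, ← hj]
    exact hle j hj.le

theorem Supermartingale.exists_ae_tendsto_of_predictable_lower_bound [IsFiniteMeasure μ]
    {X A : ℕ → Ω → ℝ} (hX : Supermartingale X ℱ μ) (hA : Adapted ℱ fun t => A (t + 1))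
    (hA₀ : ∀ ω, A 0 ω ≤ 0) (hXA : ∀ t ω, -A t ω ≤ X t ω) :
    ∀ᵐ ω ∂μ, BddAbove (Set.range fun t => A t ω) →
      ∃ l, Tendsto (fun t => X t ω) atTop (𝓝 l) := by
  have hk : ∀ k : ℕ, ∀ᵐ ω ∂μ, (∀ t, A t ω ≤ k) →
      ∃ l, Tendsto (fun t => X t ω) atTop (𝓝 l) := by
    intro k
    set τ := hittingAfter (fun t => A (t + 1)) (Set.Ioi (k : ℝ)) 0
    have hτ : IsStoppingTime ℱ τ := hA.isStoppingTime_hittingAfter measurableSet_Ioi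
    have hlow : ∀ t ω, -(k : ℝ) ≤ stoppedProcess X τ t ω := fun t ω =>
      (neg_le_neg (stoppedProcess_hittingAfter_succ_le ((hA₀ ω).trans k.cast_nonneg) t)).trans
        (hXA _ ω)
    filter_upwards [(hX.stoppedProcess hτ).exists_ae_tendsto_of_forall_le hlow] with ω hω hAk
    have hτω : τ ω = ⊤ := hittingAfter_eq_top_iff.2 fun t _ => not_lt.2 (hAk (t + 1))
    have hstop : (fun t => stoppedProcess X τ t ω) = fun t => X t ω :=
      funext fun t => stoppedProcess_eq_of_le (hτω ▸ le_top)
    rwa [hstop] at hω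
  filter_upwards [ae_all_iff.2 hk] with ω hω ⟨C, hC⟩
  exact hω ⌈C⌉₊ fun t => (hC (Set.mem_range_self t)).trans (Nat.le_ceil C)

end MeasureTheory

/-- Robbins–Siegmund convergence theorem for nonnegative almost supermartingales. -/
theorem robbins_siegmund {Ω : Type*} {m0 : MeasurableSpace Ω}
    (μ : Measure Ω) [IsProbabilityMeasure μ] (ℱ : Filtration ℕ m0)
    (V U W : ℕ → Ω → ℝ)
    (hVnn : ∀ t ω, 0 ≤ V t ω) (hUnn : ∀ t ω, 0 ≤ U t ω) (hWnn : ∀ t ω, 0 ≤ W t ω)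
    (hVadp : Adapted ℱ V) (hUadp : Adapted ℱ U) (hWadp : Adapted ℱ W)
    (hVint : ∀ t, Integrable (V t) μ) (hUint : ∀ t, Integrable (U t) μ)
    (hWint : ∀ t, Integrable (W t) μ)
    (hdrift : ∀ t, ∀ᵐ ω ∂μ, (μ[V (t + 1) | ℱ t]) ω ≤ V t ω - U t ω + W t ω) :
    μ {ω | (∑' t, ENNReal.ofReal (U t ω)) < ⊤ ∨
           (∑' t, ENNReal.ofReal (W t ω)) = ⊤} = 1 := by
  have hX := supermartingale_add_sum_sub_sum_of_condExp_le hVadp hUadp hWadp hVint hUint hWint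
    hdrift
  have hconv := hX.exists_ae_tendsto_of_predictable_lower_bound
    (A := fun t ω => ∑ s ∈ range t, W s ω) (fun t => hWadp.measurable_sum_range le_rfl)
    (fun ω => by simp) fun t ω => by
      linarith [hVnn t ω, sum_nonneg fun s (_ : s ∈ range t) => hUnn s ω]
  refine (measure_congr (ae_eq_univ.2 ?_)).trans measure_univ
  filter_upwards [hconv] with ω hω
  rw [or_iff_not_imp_right, ← ne_eq, ← lt_top_iff_ne_top,
    tsum_ofReal_lt_top_iff_bddAbove_range_sum (hUnn · ω),
    tsum_ofReal_lt_top_iff_bddAbove_range_sum (hWnn · ω)]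
  intro hW
  obtain ⟨l, hl⟩ := hω hW
  obtain ⟨CX, hCX⟩ := hl.bddAbove_range
  obtain ⟨CW, hCW⟩ := hW
  refine ⟨CX + CW, Set.forall_mem_range.2 fun t => ?_⟩
  linarith [hCX (Set.mem_range_self t), hCW (Set.mem_range_self t), hVnn t ω]
end
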